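/- With the setup above (γ a diagonal from a to b not in T; τ2 = {c,d} the first diagonal of T crossed by γ; τ1 = {a,d}, τ3 = {a,c}; ρ = {c,b}, σ = {d,b}): (a) every diagonal of T that crosses ρ also crosses γ, and every diagonal of T that crosses σ also crosses γ; (b) no arc of T incident to a crosses ρ or σ; (c) every diagonal of T that crosses γ and does not cross ρ is incident to c, and every diagonal of T that crosses γ and does not cross σ is incident to d. (This is Lemma 4.2 of the paper in the polygon model.) -/

import Mathlib

open scoped Classical

namespace PolygonCA

/-- An oriented arc: an ordered pair of vertices. -/
abbrev OArc (N : ℕ) := ZMod N × ZMod N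

variable (N : ℕ)

/-- `x` lies strictly between `p` and `q` in the counterclockwise cyclic order. -/
def Sbtw (p x q : ZMod N) : Prop :=
  0 < (x - p).val ∧ (x - p).val < (q - p).val

/-- A boundary arc: an unordered pair of cyclically adjacent vertices. -/
def IsBoundaryArc (e : Sym2 (ZMod N)) : Prop :=
  ∃ p : ZMod N, e = s(p, p + 1)

/-- A diagonal: an unordered pair of distinct non-adjacent vertices. -/
def IsPolyDiag (e : Sym2 (ZMod N)) : Prop :=
  ∃ p q : ZMod N, e = s(p, q) ∧ p ≠ q ∧ q ≠ p + 1 ∧ p ≠ q + 1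

/-- An arc: a diagonal or a boundary arc. -/
def IsArc (e : Sym2 (ZMod N)) : Prop :=
  IsPolyDiag N e ∨ IsBoundaryArc N e

/-- Two diagonals cross. -/
def Crosses (e f : Sym2 (ZMod N)) : Prop :=
  ∃ p q u v : ZMod N, e = s(p, q) ∧ f = s(u, v) ∧ Sbtw N p u q ∧ Sbtw N q v p

/-- A triangulation of the convex `N`-gon: a maximal set of pairwise
non-crossing diagonals. -/
structure IsTriangulation (T : Finset (Sym2 (ZMod N))) : Prop where
  diag : ∀ e ∈ T, IsPolyDiag N e
  noncross : ∀ e ∈ T, ∀ f ∈ T, ¬ Crosses N e f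
  maximal : ∀ e, IsPolyDiag N e → (∀ f ∈ T, ¬ Crosses N e f ∧ ¬ Crosses N f e) → e ∈ T

/-- For two (non-crossing) diagonals `e`, `f` both crossing the diagonal
oriented from `a` to `b`: `e` crosses it strictly before `f` does. -/
def CrossBefore (a b : ZMod N) (e f : Sym2 (ZMod N)) : Prop :=
  ∃ c d c' d' : ZMod N, e = s(c, d) ∧ f = s(c', d') ∧
    Sbtw N a c b ∧ Sbtw N b d a ∧ Sbtw N a c' b ∧ Sbtw N b d' a ∧
    (c - a).val ≤ (c' - a).val ∧ (a - d).val ≤ (a - d').val ∧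
    ((c - a).val < (c' - a).val ∨ (a - d).val < (a - d').val)

/-- A `T`-path from `a` to `b`: a nonempty concatenation of oriented arcs of
`T` or boundary arcs, starting at `a` and ending at `b`. -/
def IsTPath (T : Finset (Sym2 (ZMod N))) (a b : ZMod N) (α : List (OArc N)) : Prop :=
  α ≠ [] ∧
  (∀ e ∈ α, Sym2.mk.uncurry e ∈ T ∨ IsBoundaryArc N (Sym2.mk.uncurry e)) ∧
  α.head?.map Prod.fst = some a ∧
  α.getLast?.map Prod.snd = some b ∧
  α.Chain' (fun e f => f.1 = e.2)

/-- A `T`-path is reduced if no arc is immediately followed by its reverse. -/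
def IsReduced (α : List (OArc N)) : Prop :=
  α.Chain' (fun e f => f ≠ (e.2, e.1))

/-- A `(T,γ)`-path, where `γ` is the diagonal oriented from `a` to `b`.
(Positions are `0`-indexed here, so the paper's even positions are the odd
indices.) -/
def IsTGPath (T : Finset (Sym2 (ZMod N))) (a b : ZMod N) (α : List (OArc N)) : Prop :=
  IsTPath N T a b α ∧ IsReduced N α ∧ Odd α.length ∧
  (∀ (i : ℕ) (h : i < α.length), i % 2 = 1 →
      Sym2.mk.uncurry (α.get ⟨i, h⟩) ∈ T ∧ Crosses N (Sym2.mk.uncurry (α.get ⟨i, h⟩)) s(a, b)) ∧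
  (∀ (i j : ℕ) (hi : i < α.length) (hj : j < α.length),
      i % 2 = 1 → j % 2 = 1 → i ≠ j →
      Sym2.mk.uncurry (α.get ⟨i, hi⟩) ≠ Sym2.mk.uncurry (α.get ⟨j, hj⟩)) ∧
  (∀ (i j : ℕ) (hi : i < α.length) (hj : j < α.length),
      i % 2 = 1 → j % 2 = 1 → i < j →
      CrossBefore N a b (Sym2.mk.uncurry (α.get ⟨i, hi⟩)) (Sym2.mk.uncurry (α.get ⟨j, hj⟩)))

/-- The Laurent monomial attached to a path: the product of `x` of the arcs in
odd (paper-)position times the inverse of `x` of the arcs in even position. -/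
noncomputable def pathValue {F : Type*} [Field F] (x : Sym2 (ZMod N) → F)
    (α : List (OArc N)) : F :=
  ∏ i : Fin α.length,
    if (i : ℕ) % 2 = 0 then x (Sym2.mk.uncurry (α.get i)) else (x (Sym2.mk.uncurry (α.get i)))⁻¹

/-- `p1, p2, p3, p4` occur in (counterclockwise) cyclic order, pairwise distinct. -/
def InCyclicOrder (p1 p2 p3 p4 : ZMod N) : Prop :=
  0 < (p2 - p1).val ∧ (p2 - p1).val < (p3 - p1).val ∧ (p3 - p1).val < (p4 - p1).val

/-- A Ptolemy assignment over a field `F`. -/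
def IsPtolemy {F : Type*} [Field F] (x : Sym2 (ZMod N) → F) : Prop :=
  (∀ e, IsArc N e → x e ≠ 0) ∧
  ∀ p1 p2 p3 p4 : ZMod N, InCyclicOrder N p1 p2 p3 p4 →
    x s(p1, p3) * x s(p2, p4) = x s(p1, p2) * x s(p3, p4) + x s(p1, p4) * x s(p2, p3)

end PolygonCA

namespace PolygonCA


lemma val_sub_eq {N : ℕ} [NeZero N] (u v : ZMod N) :
    (u - v).val = if v.val ≤ u.val then u.val - v.val else u.val + N - v.val := by
  split_ifs with h
  · exact ZMod.val_sub h
  · have hv : v ≠ 0 := by rintro rfl; simp at h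
    rw [sub_eq_add_neg, ZMod.val_add, ZMod.neg_val, if_neg hv]
    have hu := ZMod.val_lt u
    have hvlt := ZMod.val_lt v
    rw [Nat.mod_eq_of_lt (by omega)]; omega

lemma sbtw_iff {N : ℕ} [NeZero N] (p x q : ZMod N) :
    Sbtw N p x q ↔ ((p.val < x.val ∧ x.val < q.val) ∨ (q.val < p.val ∧ p.val < x.val) ∨
      (x.val < q.val ∧ q.val < p.val)) := by
  have h1 := ZMod.val_lt p
  have h2 := ZMod.val_lt x
  have h3 := ZMod.val_lt q
  unfold Sbtw
  rw [val_sub_eq, val_sub_eq]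
  split_ifs <;> omega

lemma crosses_iff {N : ℕ} (p q u v : ZMod N) :
    Crosses N s(p, q) s(u, v) ↔
      (Sbtw N p u q ∧ Sbtw N q v p) ∨ (Sbtw N p v q ∧ Sbtw N q u p) := by
  constructor
  · rintro ⟨p', q', u', v', he, hf, h1, h2⟩
    rw [Sym2.eq_iff] at he hf
    rcases he with ⟨rfl, rfl⟩ | ⟨rfl, rfl⟩ <;> rcases hf with ⟨rfl, rfl⟩ | ⟨rfl, rfl⟩ <;> tauto
  · rintro (⟨h1, h2⟩ | ⟨h1, h2⟩)
    · exact ⟨p, q, u, v, rfl, rfl, h1, h2⟩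
    · exact ⟨p, q, v, u, rfl, Sym2.eq_swap, h1, h2⟩

set_option maxHeartbeats 1000000 in
/-- **Lemma 4.2** (polygon model). Setup: `γ = {a,b} ∉ T` is a diagonal oriented
from `a` to `b`; `τ₂ = {c,d} ∈ T` is the first diagonal of `T` crossed by `γ`
(`c` on the counterclockwise side from `a` to `b`, `d` on the other side);
`τ₁ = {a,d}` and `τ₃ = {a,c}` are the other sides of the triangle of the
triangulation on the `a`-side of `τ₂`; `ρ = {c,b}`, `σ = {d,b}`. Then:
(a) every diagonal of `T` crossing `ρ` (resp. `σ`) crosses `γ`;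
(b) no arc of `T` incident to `a` crosses `ρ` or `σ`;
(c) every diagonal of `T` crossing `γ` but not `ρ` (resp. not `σ`) is incident
to `c` (resp. `d`). -/
theorem first_crossing_lemma (N : ℕ) (hN : 4 ≤ N)
    (T : Finset (Sym2 (ZMod N))) (hT : IsTriangulation N T)
    (a b c d : ZMod N)
    (hγ : IsPolyDiag N s(a, b)) (hγT : s(a, b) ∉ T)
    (hτ2 : s(c, d) ∈ T) (hτ2γ : Crosses N s(c, d) s(a, b))
    (hc : Sbtw N a c b) (hd : Sbtw N b d a)
    (hfirst : ∀ e ∈ T, Crosses N e s(a, b) → e ≠ s(c, d) →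
      CrossBefore N a b s(c, d) e)
    (hτ1 : s(a, d) ∈ T ∨ IsBoundaryArc N s(a, d))
    (hτ3 : s(a, c) ∈ T ∨ IsBoundaryArc N s(a, c)) :
    (∀ e ∈ T, Crosses N e s(c, b) → Crosses N e s(a, b)) ∧
    (∀ e ∈ T, Crosses N e s(d, b) → Crosses N e s(a, b)) ∧
    (∀ e ∈ T, a ∈ e → ¬ Crosses N e s(c, b) ∧ ¬ Crosses N e s(d, b)) ∧
    (∀ e ∈ T, Crosses N e s(a, b) → ¬ Crosses N e s(c, b) → c ∈ e) ∧
    (∀ e ∈ T, Crosses N e s(a, b) → ¬ Crosses N e s(d, b) → d ∈ e) := by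
  haveI : NeZero N := ⟨by omega⟩
  have hA := ZMod.val_lt a
  have hB := ZMod.val_lt b
  have hC := ZMod.val_lt c
  have hD := ZMod.val_lt d
  have hcB := hc
  have hdB := hd
  rw [sbtw_iff] at hcB hdB
  refine ⟨?_, ?_, ?_, ?_, ?_⟩
  · intro e he hcross
    obtain ⟨p, q, rfl, -, -, -⟩ := hT.diag e he
    have hnc := hT.noncross _ he _ hτ2
    have hp := ZMod.val_lt p
    have hq := ZMod.val_lt q
    rw [crosses_iff] at hcross hnc ⊢
    simp only [sbtw_iff] at hcross hnc ⊢
    rcases hcB with ⟨e1, e2⟩ | ⟨e1, e2⟩ | ⟨e1, e2⟩ <;>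
    rcases hdB with ⟨f1, f2⟩ | ⟨f1, f2⟩ | ⟨f1, f2⟩ <;>
    rcases hcross with ⟨g1 | g1 | g1, g2 | g2 | g2⟩ | ⟨g1 | g1 | g1, g2 | g2 | g2⟩ <;>
    omega
  · intro e he hcross
    obtain ⟨p, q, rfl, -, -, -⟩ := hT.diag e he
    have hnc := hT.noncross _ he _ hτ2
    have hp := ZMod.val_lt p
    have hq := ZMod.val_lt q
    rw [crosses_iff] at hcross hnc ⊢
    simp only [sbtw_iff] at hcross hnc ⊢
    rcases hcB with ⟨e1, e2⟩ | ⟨e1, e2⟩ | ⟨e1, e2⟩ <;>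
    rcases hdB with ⟨f1, f2⟩ | ⟨f1, f2⟩ | ⟨f1, f2⟩ <;>
    rcases hcross with ⟨g1 | g1 | g1, g2 | g2 | g2⟩ | ⟨g1 | g1 | g1, g2 | g2 | g2⟩ <;>
    omega
  · intro e he hae
    obtain ⟨p, q, rfl, -, -, -⟩ := hT.diag e he
    have hnc := hT.noncross _ he _ hτ2
    have hp := ZMod.val_lt p
    have hq := ZMod.val_lt q
    rw [Sym2.mem_iff] at hae
    rw [crosses_iff] at hnc
    simp only [sbtw_iff] at hnc
    rcases hae with rfl | rfl <;>
    rcases hcB with ⟨e1, e2⟩ | ⟨e1, e2⟩ | ⟨e1, e2⟩ <;>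
    rcases hdB with ⟨f1, f2⟩ | ⟨f1, f2⟩ | ⟨f1, f2⟩ <;>
      exact ⟨by rw [crosses_iff]; simp only [sbtw_iff]; omega,
             by rw [crosses_iff]; simp only [sbtw_iff]; omega⟩
  · intro e he hcγ hnρ
    obtain ⟨p, q, heq, -, -, -⟩ := hT.diag e he
    subst heq
    by_cases hecd : s(p, q) = s(c, d)
    · rw [hecd, Sym2.mem_iff]; left; rfl
    · obtain ⟨c₀, d₀, c', d', hcd0, hee, h1, h2, h3, h4, h5, h6, -⟩ := hfirst _ he hcγ hecd
      rw [Sym2.eq_iff] at hcd0 hee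
      have hp := ZMod.val_lt p
      have hq := ZMod.val_lt q
      obtain ⟨rfl, rfl⟩ : c = c₀ ∧ d = d₀ := by
        rcases hcd0 with h | ⟨h1', h2'⟩
        · exact h
        · exfalso
          subst h1'; subst h2'
          rw [sbtw_iff] at h1
          omega
      rw [Sym2.mem_iff]
      rw [crosses_iff] at hnρ
      rcases hee with ⟨rfl, rfl⟩ | ⟨rfl, rfl⟩
      · left
        refine (ZMod.val_injective N ?_ : c = p)
        simp only [val_sub_eq] at h5 h6
        simp only [sbtw_iff] at hnρ h3 h4
        rcases h3 with ⟨e1, e2⟩ | ⟨e1, e2⟩ | ⟨e1, e2⟩ <;>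
        rcases h4 with ⟨f1, f2⟩ | ⟨f1, f2⟩ | ⟨f1, f2⟩ <;>
        split_ifs at h5 h6 <;> omega
      · right
        refine (ZMod.val_injective N ?_ : c = q)
        simp only [val_sub_eq] at h5 h6
        simp only [sbtw_iff] at hnρ h3 h4
        rcases h3 with ⟨e1, e2⟩ | ⟨e1, e2⟩ | ⟨e1, e2⟩ <;>
        rcases h4 with ⟨f1, f2⟩ | ⟨f1, f2⟩ | ⟨f1, f2⟩ <;>
        split_ifs at h5 h6 <;> omega
  · intro e he hcγ hnσ
    obtain ⟨p, q, heq, -, -, -⟩ := hT.diag e he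
    subst heq
    by_cases hecd : s(p, q) = s(c, d)
    · rw [hecd, Sym2.mem_iff]; right; rfl
    · obtain ⟨c₀, d₀, c', d', hcd0, hee, h1, h2, h3, h4, h5, h6, -⟩ := hfirst _ he hcγ hecd
      rw [Sym2.eq_iff] at hcd0 hee
      have hp := ZMod.val_lt p
      have hq := ZMod.val_lt q
      obtain ⟨rfl, rfl⟩ : c = c₀ ∧ d = d₀ := by
        rcases hcd0 with h | ⟨h1', h2'⟩
        · exact h
        · exfalso
          subst h1'; subst h2'
          rw [sbtw_iff] at h1
          omega
      rw [Sym2.mem_iff]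
      rw [crosses_iff] at hnσ
      rcases hee with ⟨rfl, rfl⟩ | ⟨rfl, rfl⟩
      · right
        refine (ZMod.val_injective N ?_ : d = q)
        simp only [val_sub_eq] at h5 h6
        simp only [sbtw_iff] at hnσ h3 h4
        rcases h3 with ⟨e1, e2⟩ | ⟨e1, e2⟩ | ⟨e1, e2⟩ <;>
        rcases h4 with ⟨f1, f2⟩ | ⟨f1, f2⟩ | ⟨f1, f2⟩ <;>
        split_ifs at h5 h6 <;> omega
      · left
        refine (ZMod.val_injective N ?_ : d = p)
        simp only [val_sub_eq] at h5 h6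
        simp only [sbtw_iff] at hnσ h3 h4
        rcases h3 with ⟨e1, e2⟩ | ⟨e1, e2⟩ | ⟨e1, e2⟩ <;>
        rcases h4 with ⟨f1, f2⟩ | ⟨f1, f2⟩ | ⟨f1, f2⟩ <;>
        split_ifs at h5 h6 <;> omega


end PolygonCA
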